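/- arXiv:2512.07577 — 2 statements merged into one kernel-verified Lean document; each statement's English description precedes it below -/
import Mathlib

section
/- Let 0 < ε < 1/2 and 0 < λ < 1/2. Let (A, w) be a ReLU network with n input nodes and m hidden layer nodes, let s ≥ 1 and t ≥ 512·ln(2^{s+1}/λ)/ε², and let S be the sampling matrix of a uniformly random s-element subset of {1,…,n} and T the sampling matrix of an independent uniformly random t-element subset of {1,…,m}. (1) If wᵀ·relu(Ax) ≤ 0 for all x ∈ {0,1}^n (i.e., (A, w) computes the constant 0-function), then with probability at least 1 − λ over the choices of S and T it holds that for all x ∈ {0,1}^n: (nm/(st))·wᵀ·relu(T·A·S·x) − (1/16)·ε·n·m < 0. (2) If wᵀ·relu(Ax) > 0 for all x ∈ {0,1}^n with x ≠ 0 (i.e., (A, w) computes the OR-function), then with probability at least 1 − λ it holds that for all x ∈ {0,1}^n with x ≠ 0: (nm/(st))·wᵀ·relu(T·A·S·x) + (1/16)·ε·n·m > 0. -/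
open scoped Classical
open Finset

noncomputable section

/-- The ReLU activation function. -/
def relu (z : ℝ) : ℝ := max z 0

/-- Interpret a Boolean vector as a real 0/1 vector. -/
def bv {n : ℕ} (x : Fin n → Bool) : Fin n → ℝ := fun i => if x i then 1 else 0

/-- The value at the output node of the ReLU network `(A, w)` on input `x`:
`wᵀ · relu (A x)`. -/
def netVal {m n : ℕ} (A : Matrix (Fin m) (Fin n) ℝ) (w : Fin m → ℝ) (x : Fin n → ℝ) : ℝ :=
  ∑ j, w j * relu (∑ i, A j i * x i)

/-- The Boolean function computed by the ReLU network `(A, w)`. -/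
def netBool {m n : ℕ} (A : Matrix (Fin m) (Fin n) ℝ) (w : Fin m → ℝ) (x : Fin n → Bool) : Bool :=
  decide (0 < netVal A w (bv x))

/-- The constant 0-function. -/
def zeroFun {n : ℕ} : (Fin n → Bool) → Bool := fun _ => false

/-- The OR-function: 1 iff the input is nonzero. -/
def orFun {n : ℕ} : (Fin n → Bool) → Bool := fun x => decide (∃ i, x i = true)

/-- `(A, w)` is `(ε, δ)`-close to computing `f`: one can change at most `ε·n·m` entries of `A`
and `ε·m` entries of `w` (staying in `[-1,1]`) so that the resulting network disagrees with `f`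
on at most a `δ`-fraction of the `2^n` inputs. -/
def IsClose {m n : ℕ} (A : Matrix (Fin m) (Fin n) ℝ) (w : Fin m → ℝ) (ε δ : ℝ)
    (f : (Fin n → Bool) → Bool) : Prop :=
  ∃ (A' : Matrix (Fin m) (Fin n) ℝ) (w' : Fin m → ℝ),
    (∀ j i, |A' j i| ≤ 1) ∧ (∀ j, |w' j| ≤ 1) ∧
    (((Finset.univ.filter (fun p : Fin m × Fin n => A' p.1 p.2 ≠ A p.1 p.2)).card : ℝ)
        ≤ ε * n * m) ∧
    (((Finset.univ.filter (fun j : Fin m => w' j ≠ w j)).card : ℝ) ≤ ε * m) ∧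
    (((Finset.univ.filter (fun x : Fin n → Bool => netBool A' w' x ≠ f x)).card : ℝ)
        ≤ δ * 2 ^ n)

/-- The sampling matrix of a subset `Q`: diagonal 0/1 matrix with 1 exactly at indices in `Q`. -/
def samplM {k : ℕ} (Q : Finset (Fin k)) : Matrix (Fin k) (Fin k) ℝ :=
  Matrix.diagonal fun i => if i ∈ Q then 1 else 0

/-!
For a fixed `s`-subset `S` of the inputs, the sampled network sees an input `x` only through the
pattern `p = {i ∈ S | x i}`, one of `2 ^ s` subsets of `S`, and its value is the sum, over a
uniformly random `t`-subset `T` of the hidden nodes, of the contributions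
`a j = w j * relu ((A *ᵥ 1_p) j)`, where `1_p` is the indicator vector of `p`. These lie in
`[-s, s]` and add up to the value of the whole network on `1_p`, which is `≤ 0` when the network
computes the constant 0-function. A Chernoff bound for sampling without replacement (the
exponential moment is controlled by Maclaurin's inequality `e_t / C(m, t) ≤ (e_1 / m) ^ t` and
Hoeffding's lemma) bounds the probability that this sum exceeds `t ε s / 16` by
`exp (-t ε² / 512) ≤ λ / 2 ^ (s + 1)`, and a union bound over the patterns finishes. The
OR-function case is the 0-function case for the network `(A, -w)`, because the all-zero input
has value `0`.
-/

open Matrix Real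

-- The induction step of Maclaurin's inequality: the tangent-line bound for `x ^ (t + 1)` at `α`.
theorem Nat.choose_mul_pow_add_le (M t : ℕ) {α b : ℝ} (hα : 0 ≤ α) (hb : 0 ≤ b) :
    M.choose (t + 1) * α ^ (t + 1) + M.choose t * α ^ t * b
      ≤ (M + 1).choose (t + 1) * ((M * α + b) / (M + 1)) ^ (t + 1) := by
  have hM : (0 : ℝ) < M + 1 := by positivity
  have tangent := pow_add_mul_le_add_pow hα (b := (b - α) / (M + 1))
    (by rw [show 2 * α + (b - α) / (M + 1) = ((2 * M + 1) * α + b) / (M + 1) by field_simp; ring]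
        positivity) (t + 1)
  rw [show α + (b - α) / (M + 1) = (M * α + b) / (M + 1) by field_simp; ring,
    Nat.add_sub_cancel] at tangent
  have hchoose : ((M + 1).choose (t + 1) : ℝ) * (t + 1) = (M + 1) * M.choose t := by
    exact_mod_cast (Nat.add_one_mul_choose_eq M t).symm
  have hpascal : ((M + 1).choose (t + 1) : ℝ) = M.choose t + M.choose (t + 1) := by
    exact_mod_cast Nat.choose_succ_succ' M t
  calc M.choose (t + 1) * α ^ (t + 1) + M.choose t * α ^ t * b
      = (M + 1).choose (t + 1) * (α ^ (t + 1) + ↑(t + 1) * α ^ t * ((b - α) / (M + 1))) := by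
        have hK : ((M + 1).choose (t + 1) : ℝ) * (t + 1) / (M + 1) = M.choose t := by
          rw [hchoose]; field_simp
        push_cast
        linear_combination (α ^ t * (α - b)) * hK - α ^ (t + 1) * hpascal
    _ ≤ _ := by gcongr

namespace Multiset

variable {R : Type*} [CommSemiring R]

theorem esymm_cons_succ (a : R) (s : Multiset R) (t : ℕ) :
    (a ::ₘ s).esymm (t + 1) = s.esymm (t + 1) + a * s.esymm t := by
  simp [esymm, powersetCard_cons, map_map, sum_map_mul_left]

theorem esymm_le_choose_mul_pow {s : Multiset ℝ} (hs : ∀ x ∈ s, 0 ≤ x) (t : ℕ) :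
    s.esymm t ≤ (card s).choose t * (s.sum / card s) ^ t := by
  induction s using Multiset.induction_on generalizing t with
  | empty => cases t <;> simp [esymm, powersetCard_zero_right]
  | cons a s ih =>
    cases t with
    | zero => simp [esymm]
    | succ t =>
      have ha : 0 ≤ a := hs a (mem_cons_self a s)
      have hs' : ∀ x ∈ s, 0 ≤ x := fun x hx => hs x (mem_cons_of_mem hx)
      have hmean : 0 ≤ s.sum / card s := div_nonneg (sum_nonneg hs') (Nat.cast_nonneg _)
      have hsum : (card s : ℝ) * (s.sum / card s) = s.sum := by
        rcases eq_or_ne (card s) 0 with h | h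
        · simp [card_eq_zero.mp h]
        · field_simp
      calc (a ::ₘ s).esymm (t + 1) = s.esymm (t + 1) + a * s.esymm t := esymm_cons_succ a s t
        _ ≤ (card s).choose (t + 1) * (s.sum / card s) ^ (t + 1)
              + (card s).choose t * (s.sum / card s) ^ t * a := by
          have := mul_le_mul_of_nonneg_left (ih hs' t) ha
          linarith [ih hs' (t + 1)]
        _ ≤ _ := (card s).choose_mul_pow_add_le t hmean ha
        _ = _ := by rw [hsum, card_cons, sum_cons, add_comm a]; push_cast; rfl

end Multiset

namespace Real

theorem exp_mul_le_cosh_add_div_mul_sinh {a c : ℝ} (hc : 0 < c) (ha : |a| ≤ c) (θ : ℝ) :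
    exp (θ * a) ≤ cosh (θ * c) + a / c * sinh (θ * c) := by
  obtain ⟨ha₁, ha₂⟩ := abs_le.mp ha
  rw [cosh_eq, sinh_eq]
  calc exp (θ * a) = exp ((c + a) / (2 * c) * (θ * c) + (c - a) / (2 * c) * -(θ * c)) := by
        congr 1; field_simp; ring
    _ ≤ (c + a) / (2 * c) * exp (θ * c) + (c - a) / (2 * c) * exp (-(θ * c)) :=
        convexOn_exp.2 (Set.mem_univ _) (Set.mem_univ _) (div_nonneg (by linarith) (by positivity))
          (div_nonneg (by linarith) (by positivity)) (by field_simp; ring)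
    _ = _ := by field_simp; ring

theorem sum_exp_mul_le_card_mul_exp {ι : Type*} (s : Finset ι) {a : ι → ℝ} {c θ : ℝ}
    (hc : 0 < c) (hθ : 0 ≤ θ) (ha : ∀ j ∈ s, |a j| ≤ c) (hsum : ∑ j ∈ s, a j ≤ 0) :
    ∑ j ∈ s, exp (θ * a j) ≤ #s * exp ((θ * c) ^ 2 / 2) :=
  calc ∑ j ∈ s, exp (θ * a j) ≤ ∑ j ∈ s, (cosh (θ * c) + a j / c * sinh (θ * c)) :=
        sum_le_sum fun j hj => exp_mul_le_cosh_add_div_mul_sinh hc (ha j hj) θ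
    _ = #s * cosh (θ * c) + (∑ j ∈ s, a j) / c * sinh (θ * c) := by
        rw [sum_add_distrib, sum_const, nsmul_eq_mul, ← sum_mul, ← sum_div]
    _ ≤ #s * cosh (θ * c) := by
        have : 0 ≤ sinh (θ * c) := sinh_nonneg_iff.mpr (by positivity)
        nlinarith [div_nonpos_of_nonpos_of_nonneg hsum hc.le]
    _ ≤ #s * exp ((θ * c) ^ 2 / 2) := by gcongr; exact cosh_le_exp_half_sq _

end Real

theorem card_filter_powersetCard_le_exp {ι : Type*} (s : Finset ι) (t : ℕ) {a : ι → ℝ}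
    {c δ : ℝ} (hc : 0 < c) (hδ : 0 ≤ δ) (ha : ∀ j ∈ s, |a j| ≤ c) (hsum : ∑ j ∈ s, a j ≤ 0) :
    (#{T ∈ s.powersetCard t | t * δ ≤ ∑ j ∈ T, a j} : ℝ)
      ≤ exp (-(t * δ ^ 2 / (2 * c ^ 2))) * #(s.powersetCard t) := by
  -- `θ = δ / c²` minimises the exponent `t θ² c² / 2 - θ t δ` of the Chernoff bound.
  set θ := δ / c ^ 2 with hθ_def
  have hθ : 0 ≤ θ := by positivity
  have markov : #{T ∈ s.powersetCard t | t * δ ≤ ∑ j ∈ T, a j} * exp (θ * (t * δ))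
      ≤ ∑ T ∈ s.powersetCard t, ∏ j ∈ T, exp (θ * a j) :=
    calc _ ≤ ∑ T ∈ s.powersetCard t with t * δ ≤ ∑ j ∈ T, a j, exp (θ * ∑ j ∈ T, a j) := by
          rw [← nsmul_eq_mul]
          exact card_nsmul_le_sum _ _ _ fun T hT => by
            gcongr; exact (mem_filter.mp hT).2
      _ ≤ ∑ T ∈ s.powersetCard t, exp (θ * ∑ j ∈ T, a j) :=
          sum_le_sum_of_subset_of_nonneg (filter_subset _ _) fun _ _ _ => (exp_pos _).le
      _ = _ := by simp_rw [mul_sum, exp_sum]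
  have maclaurin : ∑ T ∈ s.powersetCard t, ∏ j ∈ T, exp (θ * a j)
      ≤ #(s.powersetCard t) * exp ((θ * c) ^ 2 / 2) ^ t := by
    have h := Multiset.esymm_le_choose_mul_pow (s := s.val.map fun j => exp (θ * a j))
      (by simp [(exp_pos _).le]) t
    rw [Finset.esymm_map_val, Multiset.card_map, Finset.sum_map_val, card_val] at h
    refine h.trans ?_
    rw [card_powersetCard]
    gcongr
    exact div_le_of_le_mul₀ (Nat.cast_nonneg _) (exp_pos _).le
      ((sum_exp_mul_le_card_mul_exp s hc hθ ha hsum).trans_eq (mul_comm _ _))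
  calc (#{T ∈ s.powersetCard t | t * δ ≤ ∑ j ∈ T, a j} : ℝ)
      = #{T ∈ s.powersetCard t | t * δ ≤ ∑ j ∈ T, a j} * exp (θ * (t * δ))
          * exp (-(θ * (t * δ))) := by
        rw [mul_assoc, ← exp_add, add_neg_cancel, exp_zero, mul_one]
    _ ≤ #(s.powersetCard t) * exp ((θ * c) ^ 2 / 2) ^ t * exp (-(θ * (t * δ))) :=
        mul_le_mul_of_nonneg_right (markov.trans maclaurin) (exp_pos _).le
    _ = _ := by
        rw [← exp_nat_mul, mul_assoc, ← exp_add, mul_comm]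
        congr 2
        rw [hθ_def]
        field_simp
        ring

theorem card_filter_product_le {α β : Type*} {P : Finset α} {Q : Finset β} {R : α → β → Prop}
    [∀ x, DecidablePred (R x)] [DecidablePred fun z : α × β => R z.1 z.2] {b : ℝ}
    (h : ∀ x ∈ P, (#{y ∈ Q | R x y} : ℝ) ≤ b * #Q) :
    (#{z ∈ P ×ˢ Q | R z.1 z.2} : ℝ) ≤ b * #(P ×ˢ Q) := by
  have hfiber : #{z ∈ P ×ˢ Q | R z.1 z.2} = ∑ x ∈ P, #{y ∈ Q | R x y} := by
    simp only [card_filter, sum_product]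
    congr!
  calc (#{z ∈ P ×ˢ Q | R z.1 z.2} : ℝ) = ∑ x ∈ P, (#{y ∈ Q | R x y} : ℝ) := by
        rw [hfiber, Nat.cast_sum]
    _ ≤ ∑ x ∈ P, b * #Q := sum_le_sum h
    _ = b * #(P ×ˢ Q) := by rw [sum_const, nsmul_eq_mul, card_product, Nat.cast_mul]; ring

theorem one_sub_mul_card_le_card_filter {α : Type*} {s : Finset α} {p q : α → Prop}
    [DecidablePred p] [DecidablePred q] {lam : ℝ}
    (hpq : ∀ x ∈ s, ¬ p x → q x) (hq : (#{x ∈ s | q x} : ℝ) ≤ lam * #s) :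
    (1 - lam) * #s ≤ #{x ∈ s | p x} := by
  have hsplit : (#{x ∈ s | p x} : ℝ) + #{x ∈ s | ¬ p x} = #s := by
    exact_mod_cast card_filter_add_card_filter_not p
  have hsub : (#{x ∈ s | ¬ p x} : ℝ) ≤ #{x ∈ s | q x} := by
    exact_mod_cast card_le_card (monotone_filter_right s hpq)
  linarith

theorem abs_relu_le (z : ℝ) : |relu z| ≤ |z| := by
  rw [relu, abs_of_nonneg (le_max_right _ _)]
  exact max_le (le_abs_self z) (abs_nonneg z)

theorem netVal_eq_sum_mulVec {m n : ℕ} (A : Matrix (Fin m) (Fin n) ℝ) (w : Fin m → ℝ)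
    (x : Fin n → ℝ) :
    netVal A w x = ∑ j, w j * relu ((A *ᵥ x) j) := rfl

theorem netVal_neg {m n : ℕ} (A : Matrix (Fin m) (Fin n) ℝ) (w : Fin m → ℝ) (x : Fin n → ℝ) :
    netVal A (-w) x = -netVal A w x := by
  simp [netVal, neg_mul, sum_neg_distrib]

theorem netVal_bv_false {m n : ℕ} (A : Matrix (Fin m) (Fin n) ℝ) (w : Fin m → ℝ) :
    netVal A w (bv fun _ => false) = 0 := by
  simp [netVal, bv, relu]

theorem netVal_samplM_mul_mul {m n : ℕ} (A : Matrix (Fin m) (Fin n) ℝ) (w : Fin m → ℝ)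
    (S : Finset (Fin n)) (T : Finset (Fin m)) (x : Fin n → ℝ) :
    netVal (samplM T * A * samplM S) w x = ∑ j ∈ T, w j * relu ((A *ᵥ (samplM S *ᵥ x)) j) := by
  rw [netVal_eq_sum_mulVec, Matrix.mul_assoc, ← mulVec_mulVec, ← mulVec_mulVec]
  rw [← sum_subset (subset_univ T) fun j _ hj => by simp [samplM, mulVec_diagonal, hj, relu]]
  exact sum_congr rfl fun j hj => by simp [samplM, mulVec_diagonal, hj]

theorem samplM_mulVec_bv {n : ℕ} (S : Finset (Fin n)) (x : Fin n → Bool) :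
    samplM S *ᵥ bv x = bv fun i => decide (i ∈ {i ∈ S | x i}) := by
  ext i
  by_cases hi : i ∈ S <;> simp [samplM, mulVec_diagonal, bv, hi]

theorem abs_mulVec_bv_le {m n : ℕ} {A : Matrix (Fin m) (Fin n) ℝ} (hA : ∀ j i, |A j i| ≤ 1)
    (p : Finset (Fin n)) (j : Fin m) : |(A *ᵥ bv fun i => decide (i ∈ p)) j| ≤ #p := by
  calc |(A *ᵥ bv fun i => decide (i ∈ p)) j| = |∑ i ∈ p, A j i| := by
        simp [mulVec, dotProduct, bv, sum_ite_mem]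
    _ ≤ ∑ i ∈ p, |A j i| := abs_sum_le_sum_abs _ _
    _ ≤ ∑ i ∈ p, 1 := sum_le_sum fun i _ => hA j i
    _ = #p := by simp

theorem card_filter_exists_le_netVal_samplM_le {m n : ℕ} {A : Matrix (Fin m) (Fin n) ℝ}
    {w : Fin m → ℝ} (hA : ∀ j i, |A j i| ≤ 1) (hw : ∀ j, |w j| ≤ 1) {s t : ℕ} {δ lam : ℝ}
    (hs : 0 < s) (hδ : 0 ≤ δ) (hexp : 2 ^ s * exp (-(t * δ ^ 2 / (2 * s ^ 2))) ≤ lam)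
    (h0 : ∀ x : Fin n → Bool, netVal A w (bv x) ≤ 0) :
    (#{ST ∈ (univ : Finset (Fin n)).powersetCard s ×ˢ (univ : Finset (Fin m)).powersetCard t |
        ∃ x : Fin n → Bool, t * δ ≤ netVal (samplM ST.2 * A * samplM ST.1) w (bv x)} : ℝ)
      ≤ lam * #((univ : Finset (Fin n)).powersetCard s ×ˢ (univ : Finset (Fin m)).powersetCard t) := by
  refine card_filter_product_le (R := fun S T =>
    ∃ x : Fin n → Bool, t * δ ≤ netVal (samplM T * A * samplM S) w (bv x)) fun S hS => ?_
  have hcard : #S = s := mem_powersetCard_univ.mp hS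
  set Pt := (univ : Finset (Fin m)).powersetCard t
  set a : Finset (Fin n) → Fin m → ℝ := fun p j => w j * relu ((A *ᵥ bv fun i => decide (i ∈ p)) j)
  set bad : Finset (Fin n) → Finset (Finset (Fin m)) :=
    fun p => {T ∈ Pt | t * δ ≤ ∑ j ∈ T, a p j}
  have hcover : {T ∈ Pt |
      ∃ x : Fin n → Bool, t * δ ≤ netVal (samplM T * A * samplM S) w (bv x)}
      ⊆ S.powerset.biUnion bad := by
    intro T hT
    obtain ⟨hT, x, hx⟩ := mem_filter.mp hT
    rw [netVal_samplM_mul_mul, samplM_mulVec_bv] at hx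
    exact mem_biUnion.mpr ⟨_, mem_powerset.mpr (filter_subset _ S), mem_filter.mpr ⟨hT, hx⟩⟩
  have hchernoff : ∀ p ∈ S.powerset,
      (#(bad p) : ℝ) ≤ exp (-(t * δ ^ 2 / (2 * s ^ 2))) * #Pt := by
    intro p hp
    have hps : (#p : ℝ) ≤ s := by exact_mod_cast hcard ▸ card_le_card (mem_powerset.mp hp)
    refine card_filter_powersetCard_le_exp _ _ (by positivity) hδ (fun j _ => ?_) (h0 _)
    calc |a p j| = |w j| * |relu ((A *ᵥ bv fun i => decide (i ∈ p)) j)| := abs_mul _ _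
      _ ≤ 1 * #p := mul_le_mul (hw j) ((abs_relu_le _).trans (abs_mulVec_bv_le hA p j))
          (abs_nonneg _) zero_le_one
      _ ≤ s := by rw [one_mul]; exact hps
  calc _ ≤ ∑ p ∈ S.powerset, (#(bad p) : ℝ) := by
        exact_mod_cast (card_le_card hcover).trans card_biUnion_le
    _ ≤ ∑ p ∈ S.powerset, exp (-(t * δ ^ 2 / (2 * s ^ 2))) * #Pt :=
        sum_le_sum hchernoff
    _ = 2 ^ s * exp (-(t * δ ^ 2 / (2 * s ^ 2))) * #Pt := by
        rw [sum_const, card_powerset, hcard, nsmul_eq_mul]; push_cast; ring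
    _ ≤ lam * #Pt := by gcongr

theorem two_pow_mul_exp_le_of_log_le {s t : ℕ} {ε lam : ℝ} (hs : 0 < s) (hε : 0 < ε)
    (hlam : 0 < lam) (ht : 512 * log (2 ^ (s + 1) / lam) / ε ^ 2 ≤ t) :
    2 ^ s * exp (-(t * (ε * s / 16) ^ 2 / (2 * s ^ 2))) ≤ lam := by
  have hlog : log (2 ^ (s + 1) / lam) ≤ t * ε ^ 2 / 512 := by
    rw [div_le_iff₀ (by positivity)] at ht
    linarith
  have hs' : (0 : ℝ) < s := by exact_mod_cast hs
  calc 2 ^ s * exp (-(t * (ε * s / 16) ^ 2 / (2 * s ^ 2)))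
      = 2 ^ s * exp (-(t * ε ^ 2 / 512)) := by congr 3; field_simp; ring
    _ ≤ 2 ^ s * exp (-log (2 ^ (s + 1) / lam)) := by gcongr
    _ = lam / 2 := by
        rw [exp_neg, exp_log (by positivity), inv_div, pow_succ]; field_simp
    _ ≤ lam := by linarith

theorem le_of_le_scaled {n m s t : ℕ} {ε V : ℝ} (hs : 0 < s) (ht : 0 < t) (hsn : s ≤ n)
    (htm : t ≤ m) (h : 1 / 16 * ε * n * m ≤ n * m / (s * t) * V) : t * (ε * s / 16) ≤ V := by
  have hnm : (0 : ℝ) < n * m := by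
    have : (0 : ℝ) < n := by exact_mod_cast hs.trans_le hsn
    have : (0 : ℝ) < m := by exact_mod_cast ht.trans_le htm
    positivity
  rw [show (n : ℝ) * m / (s * t) * V = n * m * V / (s * t) by ring,
    le_div_iff₀ (by positivity)] at h
  exact le_of_mul_le_mul_left (by linear_combination h) hnm

theorem computing_network_accepted_general (n m : ℕ) (ε lam : ℝ)
    (hε1 : 0 < ε) (hl1 : 0 < lam) (hl2 : lam < 1 / 2)
    (A : Matrix (Fin m) (Fin n) ℝ) (w : Fin m → ℝ)
    (hA : ∀ j i, |A j i| ≤ 1) (hw : ∀ j, |w j| ≤ 1)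
    (s t : ℕ) (hs : 1 ≤ s)
    (ht : 512 * Real.log ((2 : ℝ) ^ (s + 1) / lam) / ε ^ 2 ≤ t) :
    let Ω : Finset (Finset (Fin n) × Finset (Fin m)) :=
      ((Finset.univ : Finset (Fin n)).powersetCard s) ×ˢ
        ((Finset.univ : Finset (Fin m)).powersetCard t)
    ((∀ x : Fin n → Bool, netVal A w (bv x) ≤ 0) →
      (1 - lam) * (Ω.card : ℝ) ≤
        ((Ω.filter (fun ST : Finset (Fin n) × Finset (Fin m) =>
          ∀ x : Fin n → Bool,
            ((n : ℝ) * m / ((s : ℝ) * t)) * netVal (samplM ST.2 * A * samplM ST.1) w (bv x)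
              - (1 / 16) * ε * n * m < 0)).card : ℝ)) ∧
    ((∀ x : Fin n → Bool, x ≠ (fun _ => false) → 0 < netVal A w (bv x)) →
      (1 - lam) * (Ω.card : ℝ) ≤
        ((Ω.filter (fun ST : Finset (Fin n) × Finset (Fin m) =>
          ∀ x : Fin n → Bool, x ≠ (fun _ => false) →
            0 < ((n : ℝ) * m / ((s : ℝ) * t)) * netVal (samplM ST.2 * A * samplM ST.1) w (bv x)
              + (1 / 16) * ε * n * m)).card : ℝ)) := by
  intro Ω
  have ht0 : 0 < t := by
    have h2 : (2 : ℝ) ≤ 2 ^ (s + 1) := le_self_pow₀ one_le_two (Nat.succ_ne_zero s)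
    have hlog : 0 < log (2 ^ (s + 1) / lam) := log_pos ((one_lt_div hl1).mpr (by linarith))
    exact_mod_cast (by positivity : (0 : ℝ) < 512 * log (2 ^ (s + 1) / lam) / ε ^ 2).trans_le ht
  have hexp := two_pow_mul_exp_le_of_log_le hs hε1 hl1 ht
  have hscale : ∀ ST ∈ Ω, ∀ V : ℝ,
      (1 / 16) * ε * n * m ≤ ((n : ℝ) * m / ((s : ℝ) * t)) * V → t * (ε * s / 16) ≤ V := by
    intro ST hST V
    obtain ⟨hS, hT⟩ := mem_product.mp hST
    exact le_of_le_scaled hs ht0 (by simpa using powersetCard_nonempty.mp ⟨_, hS⟩)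
      (by simpa using powersetCard_nonempty.mp ⟨_, hT⟩)
  refine ⟨fun h0 => one_sub_mul_card_le_card_filter (fun ST hST hbad => ?_)
      (card_filter_exists_le_netVal_samplM_le hA hw hs (by positivity) hexp h0),
    fun hor => one_sub_mul_card_le_card_filter (fun ST hST hbad => ?_)
      (card_filter_exists_le_netVal_samplM_le hA (w := -w) (by simpa using hw) hs (by positivity)
        hexp fun x => ?_)⟩
  · push Not at hbad
    obtain ⟨x, hx⟩ := hbad
    exact ⟨x, hscale ST hST _ (by linarith)⟩
  · push Not at hbad
    obtain ⟨x, -, hx⟩ := hbad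
    exact ⟨x, netVal_neg .. ▸ hscale ST hST _ (by rw [mul_neg]; linarith)⟩
  · rw [netVal_neg, neg_nonpos]
    by_cases hx : x = fun _ => false
    · rw [hx, netVal_bv_false]
    · exact (hor x hx).le

/-- If the network computes the constant 0-function (resp. the OR-function),
then with probability at least `1 - λ` over a uniformly random `s`-subset `S` of the inputs
and an independent uniformly random `t`-subset `T` of the hidden nodes, for all inputs `x`
the biased scaled sampled value `(nm/(st))·wᵀ·relu(TASx) - (1/16)·ε·n·m` is negative
(resp. `(nm/(st))·wᵀ·relu(TASx) + (1/16)·ε·n·m` is positive for `x ≠ 0`). -/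
theorem computing_network_accepted (n m : ℕ) (ε lam : ℝ)
    (hε1 : 0 < ε) (hε2 : ε < 1 / 2) (hl1 : 0 < lam) (hl2 : lam < 1 / 2)
    (A : Matrix (Fin m) (Fin n) ℝ) (w : Fin m → ℝ)
    (hA : ∀ j i, |A j i| ≤ 1) (hw : ∀ j, |w j| ≤ 1)
    (s t : ℕ) (hs : 1 ≤ s)
    (ht : 512 * Real.log ((2 : ℝ) ^ (s + 1) / lam) / ε ^ 2 ≤ t) :
    let Ω : Finset (Finset (Fin n) × Finset (Fin m)) :=
      ((Finset.univ : Finset (Fin n)).powersetCard s) ×ˢ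
        ((Finset.univ : Finset (Fin m)).powersetCard t)
    ((∀ x : Fin n → Bool, netVal A w (bv x) ≤ 0) →
      (1 - lam) * (Ω.card : ℝ) ≤
        ((Ω.filter (fun ST : Finset (Fin n) × Finset (Fin m) =>
          ∀ x : Fin n → Bool,
            ((n : ℝ) * m / ((s : ℝ) * t)) * netVal (samplM ST.2 * A * samplM ST.1) w (bv x)
              - (1 / 16) * ε * n * m < 0)).card : ℝ)) ∧
    ((∀ x : Fin n → Bool, x ≠ (fun _ => false) → 0 < netVal A w (bv x)) →
      (1 - lam) * (Ω.card : ℝ) ≤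
        ((Ω.filter (fun ST : Finset (Fin n) × Finset (Fin m) =>
          ∀ x : Fin n → Bool, x ≠ (fun _ => false) →
            0 < ((n : ℝ) * m / ((s : ℝ) * t)) * netVal (samplM ST.2 * A * samplM ST.1) w (bv x)
              + (1 / 16) * ε * n * m)).card : ℝ)) :=
  computing_network_accepted_general n m ε lam hε1 hl1 hl2 A w hA hw s t hs ht
end
end

section
/- Let A ∈ [−1,1]^{m×n} and w ∈ [−1,1]^m be arbitrary. Then for any choice of fewer than m/4 entries from A and w (i.e., any set consisting of fewer than m/4 positions, each position being either an entry of A or an entry of w), there exist A' ∈ [−1,1]^{m×n} and w' ∈ [−1,1]^m that agree with A and w respectively on all chosen positions, such that the ReLU network (A', w') computes the OR-function, i.e., w'ᵀ·relu(A'x) > 0 for all x ∈ {0,1}^n with x ≠ 0. -/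
/-!
Every row of `(A, w)` that contains none of the prescribed positions is turned into an OR-gate:
all its weights become `1`, so it contributes at least `1` on every nonzero input. In a row that
does contain prescribed positions, every free entry becomes `0`; the neuron then sees only
prescribed input weights, so it contributes at least `-ℓ`, where `ℓ` is the number of prescribed
positions in that row. Hence every row contributes at least `1 - 2ℓ`, and the output is at least
`m - 2 |P| > 0`.
-/

open scoped Classical
open Finset

noncomputable section

lemma relu_nonneg (z : ℝ) : 0 ≤ relu z := le_max_right z 0

lemma le_relu (z : ℝ) : z ≤ relu z := le_max_left z 0

lemma relu_le {z c : ℝ} (hz : z ≤ c) (hc : 0 ≤ c) : relu z ≤ c := max_le hz hc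

lemma bv_nonneg {n : ℕ} (x : Fin n → Bool) (i : Fin n) : 0 ≤ bv x i := by
  unfold bv; split <;> norm_num

lemma abs_bv_le_one {n : ℕ} (x : Fin n → Bool) (i : Fin n) : |bv x i| ≤ 1 := by
  unfold bv; split <;> norm_num

lemma bv_of_eq_true {n : ℕ} {x : Fin n → Bool} {i : Fin n} (h : x i = true) : bv x i = 1 := by
  simp [bv, h]

lemma one_le_relu_sum {ι : Type*} [Fintype ι] {a : ι → ℝ} (ha : ∀ i, 0 ≤ a i) {i₀ : ι}
    (h : 1 ≤ a i₀) : 1 ≤ relu (∑ i, a i) :=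
  h.trans <| (single_le_sum (fun i _ => ha i) (mem_univ i₀)).trans (le_relu _)

lemma neg_card_le_mul_relu_sum {ι : Type*} [Fintype ι] {a : ι → ℝ} {b : ℝ} {S : Finset ι}
    (hb : -1 ≤ b) (hS : ∀ i ∈ S, a i ≤ 1) (hSc : ∀ i ∉ S, a i = 0) :
    -(#S : ℝ) ≤ b * relu (∑ i, a i) := by
  have hsum : ∑ i, a i ≤ #S := by
    rw [← sum_subset (subset_univ S) fun i _ hi => hSc i hi]
    simpa using sum_le_sum hS
  have hrelu : relu (∑ i, a i) ≤ #S := relu_le hsum (Nat.cast_nonneg _)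
  nlinarith [mul_nonneg (neg_le_iff_add_nonneg.mp hb) (relu_nonneg (∑ i, a i))]

section Completion

variable {m n : ℕ} (P : Finset ((Fin m × Fin n) ⊕ Fin m))

def rowOf : (Fin m × Fin n) ⊕ Fin m → Fin m := Sum.elim Prod.fst id

def rowLoad (j : Fin m) : ℕ := #{p ∈ P | rowOf p = j}

def completeMatrix (A : Matrix (Fin m) (Fin n) ℝ) : Matrix (Fin m) (Fin n) ℝ := fun j i =>
  if Sum.inl (j, i) ∈ P then A j i else if rowLoad P j = 0 then 1 else 0

def completeOutput (w : Fin m → ℝ) : Fin m → ℝ := fun j =>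
  if Sum.inr j ∈ P then w j else if rowLoad P j = 0 then 1 else 0

lemma sum_rowLoad : ∑ j, rowLoad P j = #P :=
  (card_eq_sum_card_fiberwise fun p _ => mem_univ (rowOf p)).symm

lemma notMem_of_rowLoad_eq_zero {j : Fin m} (h : rowLoad P j = 0) {p : (Fin m × Fin n) ⊕ Fin m}
    (hp : rowOf p = j) : p ∉ P := fun hpP => by
  rw [rowLoad, card_eq_zero, filter_eq_empty_iff] at h
  exact h hpP hp

lemma card_inl_le_rowLoad (j : Fin m) : #{i | Sum.inl (j, i) ∈ P} ≤ rowLoad P j :=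
  card_le_card_of_injOn (fun i => Sum.inl (j, i))
    (fun i hi => mem_filter.2 ⟨by simpa using hi, rfl⟩) fun _ _ _ _ h => by simpa using h

lemma completeMatrix_of_mem (A : Matrix (Fin m) (Fin n) ℝ) {j : Fin m} {i : Fin n}
    (h : Sum.inl (j, i) ∈ P) : completeMatrix P A j i = A j i := if_pos h

lemma completeOutput_of_mem (w : Fin m → ℝ) {j : Fin m} (h : Sum.inr j ∈ P) :
    completeOutput P w j = w j := if_pos h

lemma abs_completeMatrix_le {A : Matrix (Fin m) (Fin n) ℝ} (hA : ∀ j i, |A j i| ≤ 1)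
    (j : Fin m) (i : Fin n) : |completeMatrix P A j i| ≤ 1 := by
  unfold completeMatrix; split_ifs <;> simp [hA]

lemma abs_completeOutput_le {w : Fin m → ℝ} (hw : ∀ j, |w j| ≤ 1) (j : Fin m) :
    |completeOutput P w j| ≤ 1 := by
  unfold completeOutput; split_ifs <;> simp [hw]

variable {A : Matrix (Fin m) (Fin n) ℝ} {w : Fin m → ℝ}

lemma one_sub_two_mul_rowLoad_le (hA : ∀ j i, |A j i| ≤ 1) (hw : ∀ j, |w j| ≤ 1)
    {x : Fin n → Bool} (hx : ∃ i, x i = true) (j : Fin m) :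
    1 - 2 * (rowLoad P j : ℝ) ≤
      completeOutput P w j * relu (∑ i, completeMatrix P A j i * bv x i) := by
  by_cases hj : rowLoad P j = 0
  · obtain ⟨i₀, hi₀⟩ := hx
    have hw' : completeOutput P w j = 1 := by
      simp [completeOutput, notMem_of_rowLoad_eq_zero P hj (p := Sum.inr j) rfl, hj]
    have hA' (i : Fin n) : completeMatrix P A j i = 1 := by
      simp [completeMatrix, notMem_of_rowLoad_eq_zero P hj (p := Sum.inl (j, i)) rfl, hj]
    simp only [hj, hw', hA', CharP.cast_eq_zero, mul_zero, sub_zero, one_mul]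
    exact one_le_relu_sum (bv_nonneg x) (bv_of_eq_true hi₀).ge
  · have hload : 1 ≤ (rowLoad P j : ℝ) := by exact_mod_cast Nat.one_le_iff_ne_zero.2 hj
    have hS : (#{i | Sum.inl (j, i) ∈ P} : ℝ) ≤ rowLoad P j := by
      exact_mod_cast card_inl_le_rowLoad P j
    have hrow := neg_card_le_mul_relu_sum (S := {i | Sum.inl (j, i) ∈ P})
      (a := fun i => completeMatrix P A j i * bv x i)
      (neg_le_of_abs_le (abs_completeOutput_le P hw j))
      (fun i _ => (le_abs_self _).trans <| by
        rw [abs_mul]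
        exact mul_le_one₀ (abs_completeMatrix_le P hA j i) (abs_nonneg _) (abs_bv_le_one x i))
      (fun i hi => by simp_all [completeMatrix])
    linarith

lemma netVal_complete_pos (hA : ∀ j i, |A j i| ≤ 1) (hw : ∀ j, |w j| ≤ 1) (hP : 2 * #P < m)
    {x : Fin n → Bool} (hx : ∃ i, x i = true) :
    0 < netVal (completeMatrix P A) (completeOutput P w) (bv x) := by
  have hP' : (2 * #P : ℝ) < m := by exact_mod_cast hP
  have hsum : (m : ℝ) - 2 * #P = ∑ j, (1 - 2 * (rowLoad P j : ℝ)) := by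
    rw [sum_sub_distrib, ← mul_sum, ← Nat.cast_sum, sum_rowLoad]
    simp
  have hbound : (m : ℝ) - 2 * #P ≤ netVal (completeMatrix P A) (completeOutput P w) (bv x) :=
    hsum ▸ sum_le_sum fun j _ => one_sub_two_mul_rowLoad_le P hA hw hx j
  linarith

end Completion

/-- For any `A ∈ [−1,1]^{m×n}`, `w ∈ [−1,1]^m`, and any set `P` of fewer than
`m/4` positions (each position either an entry of `A` or an entry of `w`), there exist
`A', w'` with entries in `[−1,1]` agreeing with `A, w` on all positions in `P` such that
`(A', w')` computes the OR-function, i.e. `w'ᵀ·relu(A'x) > 0` for all nonzero `x ∈ {0,1}^n`. -/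
theorem complete_to_or_function (m n : ℕ)
    (A : Matrix (Fin m) (Fin n) ℝ) (w : Fin m → ℝ)
    (hA : ∀ j i, |A j i| ≤ 1) (hw : ∀ j, |w j| ≤ 1)
    (P : Finset ((Fin m × Fin n) ⊕ Fin m)) (hP : (P.card : ℝ) < (m : ℝ) / 4) :
    ∃ (A' : Matrix (Fin m) (Fin n) ℝ) (w' : Fin m → ℝ),
      (∀ j i, |A' j i| ≤ 1) ∧ (∀ j, |w' j| ≤ 1) ∧
      (∀ p : Fin m × Fin n, Sum.inl p ∈ P → A' p.1 p.2 = A p.1 p.2) ∧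
      (∀ j : Fin m, Sum.inr j ∈ P → w' j = w j) ∧
      (∀ x : Fin n → Bool, x ≠ (fun _ => false) → 0 < netVal A' w' (bv x)) := by
  have hP2 : 2 * #P < m := by
    have : (2 * #P : ℝ) < m := by linarith [Nat.cast_nonneg (α := ℝ) #P]
    exact_mod_cast this
  refine ⟨completeMatrix P A, completeOutput P w, abs_completeMatrix_le P hA,
    abs_completeOutput_le P hw, fun p hp => completeMatrix_of_mem P A hp,
    fun j hj => completeOutput_of_mem P w hj, fun x hx => netVal_complete_pos P hA hw hP2 ?_⟩
  obtain ⟨i, hi⟩ := Function.ne_iff.mp hx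
  exact ⟨i, by simpa using hi⟩
end
end
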